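/- Let N ≥ 2 be an integer and let y > 0 be a real with (3N+1)y² ≤ 2N³ − 2N². Suppose Γ(N,y) = 0, where Γ(N,y) = Q₁(N,y)·D̄(N,y) + Q₂(N,y) with Q₁(N,y) = −3N⁷ + 5N⁶ + 2N⁵ − 6N⁴ + N³ + N² + (8N⁶ + 4N⁵ − 20N⁴ − 14N³ + 10N² + 10N + 2)y² and Q₂(N,y) = (4N⁶ − 24N⁴ − 8N³ + 18N² + 12N + 2)y³ + (−4N⁷ + 17N⁶ − 10N⁵ − 12N⁴ + 6N³ + 3N²)y. Then h₄⁰(N,y)·(N+1)·Δ(N,y) = 1. -/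

import Mathlib

set_option maxHeartbeats 2000000


/-- `D̄(N,y) = √((2N³ − 2N² − (3N+1)y²)/((N−1)(N+1)²))`. -/
noncomputable def Dbar (N : ℕ) (y : ℝ) : ℝ :=
  Real.sqrt ((2 * (N : ℝ) ^ 3 - 2 * (N : ℝ) ^ 2 - (3 * (N : ℝ) + 1) * y ^ 2)
    / (((N : ℝ) - 1) * ((N : ℝ) + 1) ^ 2))

/-- `Δ(N,y) = ((N+1)·D̄(N,y) + (2N+1)y)/(2N²)`. -/
noncomputable def DeltaFn (N : ℕ) (y : ℝ) : ℝ :=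
  (((N : ℝ) + 1) * Dbar N y + (2 * (N : ℝ) + 1) * y) / (2 * (N : ℝ) ^ 2)

/-- `h₄⁰(N,y)`. -/
noncomputable def h40 (N : ℕ) (y : ℝ) : ℝ :=
  (Dbar N y + y) / (N : ℝ)
    - ((N : ℝ) + 1) * (y - ((N : ℝ) - 1) * Dbar N y) ^ 2
        * (((N : ℝ) ^ 3 + 3 * (N : ℝ) ^ 2 - (N : ℝ) - 3) * Dbar N y
            + (3 * (N : ℝ) ^ 2 - 4 * (N : ℝ) - 3) * y)
        / (8 * (N : ℝ) ^ 2
            * (((N : ℝ) ^ 2 - 1) * Dbar N y + ((N : ℝ) ^ 2 - (N : ℝ) - 1) * y) ^ 2)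

/-- `Q₁(N,y)`, the coefficient of `D̄(N,y)` in `Γ(N,y)`. -/
noncomputable def Q1 (N : ℕ) (y : ℝ) : ℝ :=
  -3 * (N : ℝ) ^ 7 + 5 * (N : ℝ) ^ 6 + 2 * (N : ℝ) ^ 5 - 6 * (N : ℝ) ^ 4
    + (N : ℝ) ^ 3 + (N : ℝ) ^ 2
    + (8 * (N : ℝ) ^ 6 + 4 * (N : ℝ) ^ 5 - 20 * (N : ℝ) ^ 4 - 14 * (N : ℝ) ^ 3
        + 10 * (N : ℝ) ^ 2 + 10 * (N : ℝ) + 2) * y ^ 2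

/-- `Q₂(N,y)`, the part of `Γ(N,y)` not multiplying `D̄(N,y)`. -/
noncomputable def Q2 (N : ℕ) (y : ℝ) : ℝ :=
  (4 * (N : ℝ) ^ 6 - 24 * (N : ℝ) ^ 4 - 8 * (N : ℝ) ^ 3 + 18 * (N : ℝ) ^ 2
      + 12 * (N : ℝ) + 2) * y ^ 3
    + (-4 * (N : ℝ) ^ 7 + 17 * (N : ℝ) ^ 6 - 10 * (N : ℝ) ^ 5 - 12 * (N : ℝ) ^ 4
        + 6 * (N : ℝ) ^ 3 + 3 * (N : ℝ) ^ 2) * y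

lemma res_ne (N : ℕ) (hN : 2 ≤ N) : (-4*(N:ℝ)^2 - 28*(N:ℝ)^3 - 48*(N:ℝ)^4 + 64*(N:ℝ)^5 + 224*(N:ℝ)^6 - 8*(N:ℝ)^7 - 372*(N:ℝ)^8 - 60*(N:ℝ)^9 + 300*(N:ℝ)^10 + 12*(N:ℝ)^11 - 100*(N:ℝ)^12 + 20*(N:ℝ)^13) ≠ 0 := by
  rcases lt_or_ge N 5 with h | h
  · interval_cases N <;> norm_num
  · have h5 : (5:ℝ) ≤ (N:ℝ) := by exact_mod_cast h
    have h5' : (0:ℝ) ≤ (N:ℝ) - 5 := by linarith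
    have hpos : (0:ℝ) < (-4*(N:ℝ)^2 - 28*(N:ℝ)^3 - 48*(N:ℝ)^4 + 64*(N:ℝ)^5 + 224*(N:ℝ)^6 - 8*(N:ℝ)^7 - 372*(N:ℝ)^8 - 60*(N:ℝ)^9 + 300*(N:ℝ)^10 + 12*(N:ℝ)^11 - 100*(N:ℝ)^12 + 20*(N:ℝ)^13) := by nlinarith [pow_nonneg h5' 2, pow_nonneg h5' 3, pow_nonneg h5' 4, pow_nonneg h5' 5, pow_nonneg h5' 6, pow_nonneg h5' 7, pow_nonneg h5' 8, pow_nonneg h5' 9, pow_nonneg h5' 10, pow_nonneg h5' 11, pow_nonneg h5' 12, pow_nonneg h5' 13]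
    exact hpos.ne'

lemma main_aux (n y d : ℝ) (hn2 : 2 ≤ n) (hy : 0 < y) (hd0 : 0 ≤ d)
    (hE : (n-1)*(n+1)^2*d^2 = 2*n^3 - 2*n^2 - (3*n+1)*y^2)
    (hres : (-4*n^2 - 28*n^3 - 48*n^4 + 64*n^5 + 224*n^6 - 8*n^7 - 372*n^8 - 60*n^9 + 300*n^10 + 12*n^11 - 100*n^12 + 20*n^13) ≠ 0)
    (hG : (2*y^2 + 10*n*y^2 + 1*n^2 + 10*n^2*y^2 + 1*n^3 - 14*n^3*y^2 - 6*n^4 - 20*n^4*y^2 + 2*n^5 + 4*n^5*y^2 + 5*n^6 + 8*n^6*y^2 - 3*n^7) * d + (2*y^3 + 12*n*y^3 + 3*n^2*y + 18*n^2*y^3 + 6*n^3*y - 8*n^3*y^3 - 12*n^4*y - 24*n^4*y^3 - 10*n^5*y + 17*n^6*y + 4*n^6*y^3 - 4*n^7*y) = 0) :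
    ((d + y) / n - (n+1) * (y - (n-1)*d)^2 * ((n^3+3*n^2-n-3)*d + (3*n^2-4*n-3)*y)
        / (8*n^2 * ((n^2-1)*d + (n^2-n-1)*y)^2)) * (n+1)
      * (((n+1)*d + (2*n+1)*y) / (2*n^2)) = 1 := by
  have hn0 : n ≠ 0 := by linarith
  have hn1 : n - 1 ≠ 0 := by linarith
  have hn1' : n + 1 ≠ 0 := by linarith
  by_cases hq : (2*y^2 + 10*n*y^2 + 1*n^2 + 10*n^2*y^2 + 1*n^3 - 14*n^3*y^2 - 6*n^4 - 20*n^4*y^2 + 2*n^5 + 4*n^5*y^2 + 5*n^6 + 8*n^6*y^2 - 3*n^7) = 0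
  · exfalso
    have hq2 : (2*y^3 + 12*n*y^3 + 3*n^2*y + 18*n^2*y^3 + 6*n^3*y - 8*n^3*y^3 - 12*n^4*y - 24*n^4*y^3 - 10*n^5*y + 17*n^6*y + 4*n^6*y^3 - 4*n^7*y) = 0 := by linear_combination hG - d * hq
    have h3 : y * ((2 + 12*n + 18*n^2 - 8*n^3 - 24*n^4 + 4*n^6) * y^2 + (3*n^2 + 6*n^3 - 12*n^4 - 10*n^5 + 17*n^6 - 4*n^7)) = 0 := by linear_combination hq2
    rcases mul_eq_zero.mp h3 with h | h
    · exact absurd h hy.ne'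
    · exact hres (by linear_combination (2 + 12*n + 18*n^2 - 8*n^3 - 24*n^4 + 4*n^6) * hq - (2 + 10*n + 10*n^2 - 14*n^3 - 20*n^4 + 4*n^5 + 8*n^6) * h)
  · have hW : 0 < (n^2-1)*d + (n^2-n-1)*y := by
      nlinarith [mul_nonneg (show (0:ℝ) ≤ n^2-1 by nlinarith) hd0,
        mul_pos (show (0:ℝ) < n^2-n-1 by nlinarith) hy]
    have hfac : (16*n^12*((n-1)*(n+1)^2)^4 * (2*y^2 + 10*n*y^2 + 1*n^2 + 10*n^2*y^2 + 1*n^3 - 14*n^3*y^2 - 6*n^4 - 20*n^4*y^2 + 2*n^5 + 4*n^5*y^2 + 5*n^6 + 8*n^6*y^2 - 3*n^7)) ≠ 0 := by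
      refine mul_ne_zero (mul_ne_zero (mul_ne_zero (by norm_num) (pow_ne_zero _ hn0)) (pow_ne_zero _ (mul_ne_zero hn1 (pow_ne_zero _ hn1')))) hq
    have key : (16*n^12*((n-1)*(n+1)^2)^4 * (2*y^2 + 10*n*y^2 + 1*n^2 + 10*n^2*y^2 + 1*n^3 - 14*n^3*y^2 - 6*n^4 - 20*n^4*y^2 + 2*n^5 + 4*n^5*y^2 + 5*n^6 + 8*n^6*y^2 - 3*n^7)) * (3*n*d^4 + 12*n*y*d^3 + 18*n*y^2*d^2 + 12*n*y^3*d + 3*n*y^4 + 12*n^2*d^4 + 60*n^2*y*d^3 + 108*n^2*y^2*d^2 + 84*n^2*y^3*d + 24*n^2*y^4 + 8*n^3*d^4 + 74*n^3*y*d^3 + 192*n^3*y^2*d^2 + 194*n^3*y^3*d + 68*n^3*y^4 - 20*n^4*d^4 - 56*n^4*y*d^3 + 6*n^4*y^2*d^2 + 112*n^4*y^3*d + 70*n^4*y^4 - 16*n^5*d^2 - 26*n^5*d^4 - 32*n^5*y*d - 154*n^5*y*d^3 - 16*n^5*y^2 - 278*n^5*y^2*d^2 - 168*n^5*y^3*d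 - 15*n^5*y^4 + 4*n^6*d^4 - 32*n^6*y*d - 36*n^6*y*d^3 - 32*n^6*y^2 - 168*n^6*y^2*d^2 - 196*n^6*y^3*d - 62*n^6*y^4 + 32*n^7*d^2 + 16*n^7*d^4 + 64*n^7*y*d + 70*n^7*y*d^3 + 16*n^7*y^2 + 84*n^7*y^2*d^2 + 18*n^7*y^3*d - 8*n^7*y^4 + 4*n^8*d^4 + 32*n^8*y*d + 32*n^8*y*d^3 + 32*n^8*y^2 + 70*n^8*y^2*d^2 + 56*n^8*y^3*d + 16*n^8*y^4 - 16*n^9*d^2 - 1*n^9*d^4 - 32*n^9*y*d - 2*n^9*y*d^3 - 16*n^9*y^2) = 0 := by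
      linear_combination (-96*n^13*y^2*d^2 - 384*n^13*y^3*d - 288*n^13*y^4 - 1152*n^14*y^2*d^2 - 4992*n^14*y^3*d - 4032*n^14*y^4 - 48*n^15*d^2 - 192*n^15*y*d - 144*n^15*y^2 - 5248*n^15*y^2*d^2 - 25408*n^15*y^3*d - 22816*n^15*y^4 - 384*n^16*d^2 - 1728*n^16*y*d - 1440*n^16*y^2 - 9088*n^16*y^2*d^2 - 55552*n^16*y^3*d - 61248*n^16*y^4 - 752*n^17*d^2 - 4448*n^17*y*d - 4640*n^17*y^2 + 8224*n^17*y^2*d^2 + 1472*n^17*y^3*d - 45632*n^17*y^4 + 1536*n^18*d^2 + 3648*n^18*y*d - 832*n^18*y^2 + 57728*n^18*y^2*d^2 + 259584*n^18*y^3*d + 173568*n^18*y^4 + 6832*n^19*d^2 + 33216*n^19*y*d + 26096*n^19*y^2 + 63040*n^19*y^2*d^2 + 436096*n^19*y^3*d + 477824*n^19*y^4 + 1408*n^20*d^2 + 27520*n^20*y*d + 42336*n^20*y^2 - 80512*n^20*y^2*d^2 - 136448*n^20*y^3*d + 225280*n^20*y^4 - 21776*n^21*d^2 - 86560*n^21*y*d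 - 40576*n^21*y^2 - 235200*n^21*y^2*d^2 - 1179136*n^21*y^3*d - 810176*n^21*y^4 - 20480*n^22*d^2 - 148224*n^22*y*d - 153088*n^22*y^2 - 71936*n^22*y^2*d^2 - 919808*n^22*y^3*d - 1284480*n^22*y^4 + 34336*n^23*d^2 + 89728*n^23*y*d - 28704*n^23*y^2 + 312320*n^23*y^2*d^2 + 1086592*n^23*y^3*d + 82496*n^23*y^4 + 55552*n^24*d^2 + 323456*n^24*y*d + 256448*n^24*y^2 + 324864*n^24*y^2*d^2 + 2055680*n^24*y^3*d + 1727360*n^24*y^4 - 24416*n^25*d^2 + 28224*n^25*y*d + 183872*n^25*y^2 - 134336*n^25*y^2*d^2 + 166528*n^25*y^3*d + 1118464*n^25*y^4 - 78848*n^26*d^2 - 393344*n^26*y*d - 226944*n^26*y^2 - 381184*n^26*y^2*d^2 - 1828352*n^26*y^3*d - 864768*n^26*y^4 - 4256*n^27*d^2 - 181888*n^27*y*d - 280480*n^27*y^2 - 96384*n^27*y^2*d^2 - 1111552*n^27*y^3*d - 1309824*n^27*y^4 + 66304*n^28*d^2 + 279552*n^28*y*d + 89792*n^28*y^2 + 201472*n^28*y^2*d^2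 + 656896*n^28*y^3*d - 100864*n^28*y^4 + 23008*n^29*d^2 + 217024*n^29*y*d + 223104*n^29*y^2 + 139040*n^29*y^2*d^2 + 886144*n^29*y^3*d + 621280*n^29*y^4 - 32768*n^30*d^2 - 106240*n^30*y*d + 11264*n^30*y^2 - 33408*n^30*y^2*d^2 + 61568*n^30*y^3*d + 280384*n^30*y^4 - 19184*n^31*d^2 - 131520*n^31*y*d - 99664*n^31*y^2 - 60800*n^31*y^2*d^2 - 290624*n^31*y^3*d - 107040*n^31*y^4 + 8320*n^32*d^2 + 11584*n^32*y*d - 25632*n^32*y^2 - 10624*n^32*y^2*d^2 - 111872*n^32*y^3*d - 102976*n^32*y^4 + 7504*n^33*d^2 + 42272*n^33*y*d + 23264*n^33*y^2 + 9376*n^33*y^2*d^2 + 27072*n^33*y^3*d - 7104*n^33*y^4 - 512*n^34*d^2 + 5184*n^34*y*d + 9152*n^34*y^2 + 3968*n^34*y^2*d^2 + 23552*n^34*y^3*d + 11776*n^34*y^4 - 1296*n^35*d^2 - 5952*n^35*y*d - 2128*n^35*y^2 + 64*n^35*y^2*d^2 + 3200*n^35*y^3*d + 2816*n^35*y^4 -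 128*n^36*d^2 - 1408*n^36*y*d - 1056*n^36*y^2 - 128*n^36*y^2*d^2 - 256*n^36*y^3*d + 48*n^37*d^2 + 96*n^37*y*d) * hE + (192*n^13*y^2*d + 192*n^13*y^3 + 1920*n^14*y^2*d + 2112*n^14*y^3 + 96*n^15*d + 96*n^15*y + 6912*n^15*y^2*d + 8896*n^15*y^3 + 576*n^16*d + 672*n^16*y + 7296*n^16*y^2*d + 15040*n^16*y^3 + 480*n^17*d + 1088*n^17*y - 18048*n^17*y^2*d - 6464*n^17*y^3 - 3072*n^18*d - 2304*n^18*y - 56448*n^18*y^2*d - 64320*n^18*y^3 - 5760*n^19*d - 8064*n^19*y - 24960*n^19*y^2*d - 75840*n^19*y^3 + 5376*n^20*d - 640*n^20*y + 97152*n^20*y^2*d + 45504*n^20*y^3 + 18816*n^21*d + 19968*n^21*y + 135936*n^21*y^2*d + 173888*n^21*y^3 + 14592*n^22*y - 29568*n^22*y^2*d + 87104*n^22*y^3 - 30912*n^23*d - 23488*n^23*y - 181632*n^23*y^2*d - 127936*n^23*y^3 - 13440*n^24*d - 29760*n^24*y - 86400*n^24*y^2*d - 161216*n^24*y^3 + 28224*n^25*d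 + 11904*n^25*y + 94848*n^25*y^2*d + 1600*n^25*y^3 + 21504*n^26*d + 28928*n^26*y + 104064*n^26*y^2*d + 95296*n^26*y^3 - 13440*n^27*d + 1152*n^27*y - 1152*n^27*y^2*d + 41280*n^27*y^3 - 16128*n^28*d - 14976*n^28*y - 43392*n^28*y^2*d - 18624*n^28*y^3 + 1920*n^29*d - 4096*n^29*y - 16320*n^29*y^2*d - 17664*n^29*y^3 + 6144*n^30*d + 3840*n^30*y + 4608*n^30*y^2*d - 1408*n^30*y^3 + 864*n^31*d + 1632*n^31*y + 4224*n^31*y^2*d + 2048*n^31*y^3 - 960*n^32*d - 352*n^32*y + 768*n^32*y^2*d + 512*n^32*y^3 - 288*n^33*d - 192*n^33*y) * hG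
    have hP : (3*n*d^4 + 12*n*y*d^3 + 18*n*y^2*d^2 + 12*n*y^3*d + 3*n*y^4 + 12*n^2*d^4 + 60*n^2*y*d^3 + 108*n^2*y^2*d^2 + 84*n^2*y^3*d + 24*n^2*y^4 + 8*n^3*d^4 + 74*n^3*y*d^3 + 192*n^3*y^2*d^2 + 194*n^3*y^3*d + 68*n^3*y^4 - 20*n^4*d^4 - 56*n^4*y*d^3 + 6*n^4*y^2*d^2 + 112*n^4*y^3*d + 70*n^4*y^4 - 16*n^5*d^2 - 26*n^5*d^4 - 32*n^5*y*d - 154*n^5*y*d^3 - 16*n^5*y^2 - 278*n^5*y^2*d^2 - 168*n^5*y^3*d - 15*n^5*y^4 + 4*n^6*d^4 - 32*n^6*y*d - 36*n^6*y*d^3 - 32*n^6*y^2 - 168*n^6*y^2*d^2 - 196*n^6*y^3*d - 62*n^6*y^4 + 32*n^7*d^2 + 16*n^7*d^4 + 64*n^7*y*d + 70*n^7*y*d^3 + 16*n^7*y^2 + 84*n^7*y^2*d^2 + 18*n^7*y^3*d - 8*n^7*y^4 + 4*n^8*d^4 + 32*n^8*y*d + 32*n^8*y*d^3 + 32*n^8*y^2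 + 70*n^8*y^2*d^2 + 56*n^8*y^3*d + 16*n^8*y^4 - 16*n^9*d^2 - 1*n^9*d^4 - 32*n^9*y*d - 2*n^9*y*d^3 - 16*n^9*y^2) = 0 := by
      rcases mul_eq_zero.mp key with h | h
      · exact absurd h hfac
      · exact h
    have hW0 : (n^2-1)*d + (n^2-n-1)*y ≠ 0 := hW.ne'
    have hW0' : d * (n ^ 2 - 1) + y * (n * (n - 1) - 1) ≠ 0 := by intro h; apply hW0; linear_combination h
    field_simp
    apply mul_left_cancel₀ hn0
    linear_combination hP

/-- If `Γ(N,y) = Q₁(N,y)·D̄(N,y) + Q₂(N,y) = 0` for a root `y > 0` with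
`(3N+1)y² ≤ 2N³ − 2N²`, then `h₄⁰(N,y)·(N+1)·Δ(N,y) = 1`. -/
theorem h40_times_Delta (N : ℕ) (hN : 2 ≤ N) (y : ℝ) (hy : 0 < y)
    (hy2 : (3 * (N : ℝ) + 1) * y ^ 2 ≤ 2 * (N : ℝ) ^ 3 - 2 * (N : ℝ) ^ 2)
    (hΓ : Q1 N y * Dbar N y + Q2 N y = 0) :
    h40 N y * ((N : ℝ) + 1) * DeltaFn N y = 1 := by
  have hn2 : (2:ℝ) ≤ (N:ℝ) := by exact_mod_cast hN
  have hd0 : (0:ℝ) ≤ Dbar N y := Real.sqrt_nonneg _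
  have hden : (0:ℝ) < ((N:ℝ)-1)*((N:ℝ)+1)^2 := by nlinarith
  have hsq : (Dbar N y)^2 = (2*(N:ℝ)^3 - 2*(N:ℝ)^2 - (3*(N:ℝ)+1)*y^2) / (((N:ℝ)-1)*((N:ℝ)+1)^2) := by
    rw [Dbar]
    exact Real.sq_sqrt (div_nonneg (by linarith) hden.le)
  have hE : ((N:ℝ)-1)*((N:ℝ)+1)^2*(Dbar N y)^2 = 2*(N:ℝ)^3 - 2*(N:ℝ)^2 - (3*(N:ℝ)+1)*y^2 := by
    rw [hsq]; field_simp [show (N:ℝ)-1 ≠ 0 by linarith]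
  have hG : (2*y^2 + 10*(N:ℝ)*y^2 + 1*(N:ℝ)^2 + 10*(N:ℝ)^2*y^2 + 1*(N:ℝ)^3 - 14*(N:ℝ)^3*y^2 - 6*(N:ℝ)^4 - 20*(N:ℝ)^4*y^2 + 2*(N:ℝ)^5 + 4*(N:ℝ)^5*y^2 + 5*(N:ℝ)^6 + 8*(N:ℝ)^6*y^2 - 3*(N:ℝ)^7) * Dbar N y + (2*y^3 + 12*(N:ℝ)*y^3 + 3*(N:ℝ)^2*y + 18*(N:ℝ)^2*y^3 + 6*(N:ℝ)^3*y - 8*(N:ℝ)^3*y^3 - 12*(N:ℝ)^4*y - 24*(N:ℝ)^4*y^3 - 10*(N:ℝ)^5*y + 17*(N:ℝ)^6*y + 4*(N:ℝ)^6*y^3 - 4*(N:ℝ)^7*y) = 0 := by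
    simp only [Q1, Q2] at hΓ; linear_combination hΓ
  have hmain := main_aux (N:ℝ) y (Dbar N y) hn2 hy hd0 hE (res_ne N hN) hG
  simp only [h40, DeltaFn]
  linear_combination hmain
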